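/- arXiv:1209.1274 — 3 statements merged into one kernel-verified Lean document; each statement's English description precedes it below -/
import Mathlib

section
/- Let Q_1, Q_2, … be i.i.d. random probability measures on ℕ₀ with 0 < m(Q_i) < ∞ a.s., and let f_i(s) = Σ_{k≥0} Q_i(k) s^k denote the (random) probability generating function of Q_i. Then for every 0 ≤ λ ≤ 1 with E[m(Q_1)^λ] < ∞ and every n ≥ 1, E[1 − f_1(f_2(⋯ f_n(0) ⋯))] ≤ (E[m(Q_1)^λ])^n. (Here 1 − f_1(f_2(⋯ f_n(0) ⋯)) is the quenched survival probability P(Z_n > 0 | Q_1, …, Q_n) of a branching process in the random environment (Q_1, Q_2, …) started from one individual, so this states P(Z_n > 0) ≤ E[e^{λX}]^n with X = log m(Q_1).) -/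
/-!
Each generating function satisfies `1 - f(s) ≤ m(f) (1 - s)` on `[0, 1]` (Bernoulli's inequality
`1 - s^k ≤ k (1 - s)`, averaged over `k`), so iterating from `s = 0` bounds the quenched survival
probability by `min(1, m(Q_1) ⋯ m(Q_n)) ≤ (m(Q_1) ⋯ m(Q_n))^λ`. Taking expectations, independence
factorises the right-hand side into `E[m(Q_1)^λ]^n`.
-/

open MeasureTheory ProbabilityTheory Finset
open scoped ENNReal

/-- The space `Δ` of probability measures on `ℕ` (represented by `PMF ℕ`) carries the σ-algebra
generated by the evaluation maps `p ↦ p(k)`. -/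
noncomputable instance : MeasurableSpace (PMF ℕ) :=
  MeasurableSpace.comap (fun p : PMF ℕ => (p : ℕ → ℝ≥0∞)) inferInstance

/-- The mean `m(p) = Σ_y y p(y)` of a probability measure on `ℕ`. -/
noncomputable def pmfMean (p : PMF ℕ) : ℝ≥0∞ := ∑' y : ℕ, (y : ℝ≥0∞) * p y

/-- The probability generating function `f(s) = Σ_k p(k) s^k`. -/
noncomputable def pmfPgf (p : PMF ℕ) (s : ℝ) : ℝ := ∑' k : ℕ, (p k).toReal * s ^ k

namespace PMF

lemma hasSum_toReal {α : Type*} (p : PMF α) : HasSum (fun a => (p a).toReal) 1 := by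
  have := ENNReal.hasSum_toReal (f := p) (by simp)
  rwa [← ENNReal.tsum_toReal_eq p.apply_ne_top, p.tsum_coe, ENNReal.toReal_one] at this

lemma summable_toReal_mul_pow (p : PMF ℕ) {s : ℝ} (hs0 : 0 ≤ s) (hs1 : s ≤ 1) :
    Summable fun k => (p k).toReal * s ^ k :=
  p.hasSum_toReal.summable.of_nonneg_of_le (fun _ => by positivity)
    fun _ => mul_le_of_le_one_right ENNReal.toReal_nonneg (pow_le_one₀ hs0 hs1)

end PMF

lemma pmfPgf_nonneg (p : PMF ℕ) {s : ℝ} (hs : 0 ≤ s) : 0 ≤ pmfPgf p s :=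
  tsum_nonneg fun _ => by positivity

lemma pmfPgf_le_one (p : PMF ℕ) {s : ℝ} (hs0 : 0 ≤ s) (hs1 : s ≤ 1) : pmfPgf p s ≤ 1 :=
  hasSum_le (fun _ => mul_le_of_le_one_right ENNReal.toReal_nonneg (pow_le_one₀ hs0 hs1))
    (p.summable_toReal_mul_pow hs0 hs1).hasSum p.hasSum_toReal

lemma hasSum_one_sub_pmfPgf (p : PMF ℕ) {s : ℝ} (hs0 : 0 ≤ s) (hs1 : s ≤ 1) :
    HasSum (fun k => (p k).toReal * (1 - s ^ k)) (1 - pmfPgf p s) := by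
  simpa only [mul_one_sub, pmfPgf] using
    p.hasSum_toReal.sub (p.summable_toReal_mul_pow hs0 hs1).hasSum

lemma one_sub_pow_le_mul_one_sub {s : ℝ} (hs : -1 ≤ s) (k : ℕ) : 1 - s ^ k ≤ k * (1 - s) := by
  have := one_add_mul_le_pow (a := s - 1) (by linarith) k
  rw [add_sub_cancel] at this
  linarith

lemma ofReal_one_sub_pmfPgf_le (p : PMF ℕ) {s : ℝ} (hs0 : 0 ≤ s) (hs1 : s ≤ 1) :
    ENNReal.ofReal (1 - pmfPgf p s) ≤ pmfMean p * ENNReal.ofReal (1 - s) := by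
  have hsum := hasSum_one_sub_pmfPgf p hs0 hs1
  have hterm_nonneg (k : ℕ) : 0 ≤ (p k).toReal * (1 - s ^ k) :=
    mul_nonneg ENNReal.toReal_nonneg (sub_nonneg.2 (pow_le_one₀ hs0 hs1))
  rw [← hsum.tsum_eq, ENNReal.ofReal_tsum_of_nonneg hterm_nonneg hsum.summable, pmfMean,
    ← ENNReal.tsum_mul_right]
  refine ENNReal.tsum_le_tsum fun k => ?_
  rw [ENNReal.ofReal_mul ENNReal.toReal_nonneg, ENNReal.ofReal_toReal (p.apply_ne_top k),
    mul_comm (k : ℝ≥0∞), mul_assoc, ← ENNReal.ofReal_natCast,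
    ← ENNReal.ofReal_mul (Nat.cast_nonneg k)]
  gcongr
  exact one_sub_pow_le_mul_one_sub (by linarith) k

section Iterate

variable {ι : Type*} (q : ι → PMF ℕ)

lemma foldr_pmfPgf_mem_Icc (L : List ι) :
    L.foldr (fun i s => pmfPgf (q i) s) 0 ∈ Set.Icc 0 1 := by
  induction L with
  | nil => simp
  | cons i L ih => exact ⟨pmfPgf_nonneg _ ih.1, pmfPgf_le_one _ ih.1 ih.2⟩

lemma ofReal_one_sub_foldr_pmfPgf_le_prod (L : List ι) :
    ENNReal.ofReal (1 - L.foldr (fun i s => pmfPgf (q i) s) 0)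
      ≤ (L.map fun i => pmfMean (q i)).prod := by
  induction L with
  | nil => simp
  | cons i L ih =>
    obtain ⟨hs0, hs1⟩ := foldr_pmfPgf_mem_Icc q L
    calc ENNReal.ofReal (1 - pmfPgf (q i) (L.foldr (fun i s => pmfPgf (q i) s) 0))
        ≤ pmfMean (q i) * ENNReal.ofReal (1 - L.foldr (fun i s => pmfPgf (q i) s) 0) :=
          ofReal_one_sub_pmfPgf_le _ hs0 hs1
      _ ≤ _ := by simpa using mul_le_mul_right ih _

end Iterate

lemma ENNReal.le_rpow_of_le_of_le_one {x y : ℝ≥0∞} {l : ℝ} (hl0 : 0 ≤ l) (hl1 : l ≤ 1)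
    (hy1 : y ≤ 1) (hyx : y ≤ x) : y ≤ x ^ l :=
  calc y = y ^ (1 : ℝ) := (ENNReal.rpow_one y).symm
    _ ≤ y ^ l := ENNReal.rpow_le_rpow_of_exponent_ge hy1 hl1
    _ ≤ x ^ l := ENNReal.rpow_le_rpow hyx hl0

lemma ofReal_one_sub_foldr_range_pmfPgf_le (q : ℕ → PMF ℕ) {l : ℝ} (hl0 : 0 ≤ l) (hl1 : l ≤ 1)
    (n : ℕ) :
    ENNReal.ofReal (1 - (List.range n).foldr (fun i s => pmfPgf (q (i + 1)) s) 0)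
      ≤ ∏ i ∈ range n, pmfMean (q (i + 1)) ^ l := by
  rw [ENNReal.prod_rpow_of_nonneg hl0]
  refine ENNReal.le_rpow_of_le_of_le_one hl0 hl1 ?_ ?_
  · exact ENNReal.ofReal_le_one.2 (sub_le_self _ (foldr_pmfPgf_mem_Icc _ _).1)
  · simpa [Finset.prod_eq_multiset_prod, Multiset.range] using
      ofReal_one_sub_foldr_pmfPgf_le_prod (fun i => q (i + 1)) (List.range n)

lemma measurable_pmfMean : Measurable pmfMean :=
  Measurable.tsum fun y =>
    measurable_const.mul ((measurable_pi_apply y).comp (Measurable.of_comap_le le_rfl))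

theorem statement1_general
    {Ω : Type*} [MeasurableSpace Ω] (P : Measure Ω) [IsProbabilityMeasure P]
    (Q : ℕ → Ω → PMF ℕ) (hmeas : ∀ i, Measurable (Q i))
    (hindep : iIndepFun Q P)
    (hident : ∀ i, P.map (Q i) = P.map (Q 1))
    (lam : ℝ) (hlam0 : 0 ≤ lam) (hlam1 : lam ≤ 1)
    (n : ℕ) :
    ∫⁻ ω, ENNReal.ofReal
        (1 - (List.range n).foldr (fun i acc => pmfPgf (Q (i + 1) ω) acc) 0) ∂P
      ≤ (∫⁻ ω, pmfMean (Q 1 ω) ^ lam ∂P) ^ n := by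
  set h : PMF ℕ → ℝ≥0∞ := fun p => pmfMean p ^ lam
  have hh : Measurable h := measurable_pmfMean.pow_const lam
  have hindep_succ : iIndepFun (fun i ω => h (Q (i + 1) ω)) P :=
    (hindep.precomp (add_left_injective 1)).comp (fun _ => h) fun _ => hh
  have hlintegral_eq (i : ℕ) : ∫⁻ ω, h (Q i ω) ∂P = ∫⁻ ω, h (Q 1 ω) ∂P := by
    rw [← lintegral_map hh (hmeas i), hident i, lintegral_map hh (hmeas 1)]
  calc _ ≤ ∫⁻ ω, ∏ i ∈ range n, h (Q (i + 1) ω) ∂P :=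
        lintegral_mono fun ω => ofReal_one_sub_foldr_range_pmfPgf_le (Q · ω) hlam0 hlam1 n
    _ = ∏ i ∈ range n, ∫⁻ ω, h (Q (i + 1) ω) ∂P :=
        lintegral_prod_eq_prod_lintegral_of_indepFun _ _ hindep_succ fun i => hh.comp (hmeas _)
    _ = _ := by rw [prod_congr rfl fun i _ => hlintegral_eq (i + 1), prod_const, card_range]

/-- Let `Q_1, Q_2, …` be i.i.d. random probability measures on `ℕ` with
`0 < m(Q_i) < ∞` a.s., and let `f_i` be the (random) generating function of `Q_i`. Then for
every `0 ≤ λ ≤ 1` with `E[m(Q_1)^λ] < ∞` and every `n ≥ 1`,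
`E[1 − f_1(f_2(⋯ f_n(0) ⋯))] ≤ (E[m(Q_1)^λ])^n`;
the integrand being the quenched survival probability `P(Z_n > 0 | Q_1, …, Q_n)` of a branching
process in the random environment `(Q_1, Q_2, …)` started from one individual. -/
theorem statement1
    {Ω : Type*} [MeasurableSpace Ω] (P : Measure Ω) [IsProbabilityMeasure P]
    (Q : ℕ → Ω → PMF ℕ) (hmeas : ∀ i, Measurable (Q i))
    (hindep : iIndepFun Q P)
    (hident : ∀ i, P.map (Q i) = P.map (Q 1))
    (hm : ∀ i, ∀ᵐ ω ∂P, 0 < pmfMean (Q i ω) ∧ pmfMean (Q i ω) < ⊤)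
    (lam : ℝ) (hlam0 : 0 ≤ lam) (hlam1 : lam ≤ 1)
    (hmom : ∫⁻ ω, pmfMean (Q 1 ω) ^ lam ∂P < ⊤)
    (n : ℕ) (hn : 1 ≤ n) :
    ∫⁻ ω, ENNReal.ofReal
        (1 - (List.range n).foldr (fun i acc => pmfPgf (Q (i + 1) ω) acc) 0) ∂P
      ≤ (∫⁻ ω, pmfMean (Q 1 ω) ^ lam ∂P) ^ n :=
  statement1_general P Q hmeas hindep hident lam hlam0 hlam1 n
end

section
/- Let (Z_n) be a branching process in the varying environment (q_1, q_2, …) with Z_0 = 1, and assume each q_i has finite second moment. Then for every n ≥ 1, P(Z_n > 0) ≥ ( e^{−S_n} + Σ_{k=0}^{n−1} η(q_{k+1}) e^{−S_k} )^{−1}. -/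
open MeasureTheory ProbabilityTheory Finset
open scoped ENNReal

/-!
Conditioning on `Z N`, which is independent of the offspring numbers of generation `N + 1`, gives
`E Z_{N+1} = m_{N+1} E Z_N` and
`E Z_{N+1}² + m_{N+1}² E Z_N = s_{N+1} E Z_N + m_{N+1}² E Z_N²`,
where `s` is the second moment of the offspring law. Hence `E Z_n = e^{S_n}`, and an induction on
this recurrence gives `E Z_n² ≤ e^{2 S_n} C_n`, with `C_n` the bracket of the statement. The second
moment method (Cauchy–Schwarz for `Z_n = Z_n 1{Z_n > 0}`) gives `(E Z_n)² ≤ E Z_n² P(Z_n > 0)`,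
and the two bounds combine to `P(Z_n > 0) ≥ C_n⁻¹`.
-/

/-- The mean `m(q) = Σ_y y q({y})` of a measure on `ℕ`, as an extended nonnegative real. -/
noncomputable def measMean (q : Measure ℕ) : ℝ≥0∞ := ∑' y : ℕ, (y : ℝ≥0∞) * q {y}

/-- The associated random walk `S_n = Σ_{i=1}^n log m(q_i)` of the environment `(q_1, q_2, …)`. -/
noncomputable def envWalk (q : ℕ → Measure ℕ) (n : ℕ) : ℝ :=
  ∑ i ∈ Finset.range n, Real.log (measMean (q (i + 1))).toReal

/-- The standardized second moment `η(q) = Σ_{y ≥ 1} y² q({y}) / m(q)²`. -/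
noncomputable def measEta (q : Measure ℕ) : ℝ :=
  (∑' y : ℕ, (y : ℝ≥0∞) ^ 2 * q {y}).toReal / (measMean q).toReal ^ 2

noncomputable def measSecondMoment (q : Measure ℕ) : ℝ≥0∞ := ∑' y : ℕ, (y : ℝ≥0∞) ^ 2 * q {y}

section Moments

variable {Ω ι α : Type*} [mΩ : MeasurableSpace Ω] {P : Measure Ω}

theorem lintegral_comp_eq_tsum [MeasurableSpace α] [Countable α] [MeasurableSingletonClass α]
    {X : Ω → α} (hX : Measurable X) (g : α → ℝ≥0∞) :
    ∫⁻ ω, g (X ω) ∂P = ∑' a, g a * P (X ⁻¹' {a}) := by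
  rw [← lintegral_map (measurable_of_countable g) hX, lintegral_countable']
  exact tsum_congr fun a => by rw [Measure.map_apply hX (measurableSet_singleton a)]

theorem lintegral_comp_eq_tsum_of_indep [MeasurableSpace α] [Countable α]
    [MeasurableSingletonClass α] {F G : MeasurableSpace Ω} (hF : F ≤ mΩ) (hG : G ≤ mΩ)
    (hFG : Indep F G P) {X : Ω → α} (hX : Measurable[F] X) {f : α → Ω → ℝ≥0∞}
    (hf : ∀ a, Measurable[G] (f a)) :
    ∫⁻ ω, f (X ω) ω ∂P = ∑' a, P (X ⁻¹' {a}) * ∫⁻ ω, f a ω ∂P := by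
  have hXa : ∀ a, MeasurableSet[F] (X ⁻¹' {a}) := fun a => hX (measurableSet_singleton a)
  have hind : ∀ a, Measurable[F] ((X ⁻¹' {a}).indicator (1 : Ω → ℝ≥0∞)) :=
    fun a => (@measurable_one ℝ≥0∞ Ω _ F _).indicator (hXa a)
  have hsplit : ∀ ω, f (X ω) ω = ∑' a, (X ⁻¹' {a}).indicator 1 ω * f a ω := by
    intro ω
    rw [tsum_eq_single (X ω) fun a ha => by simp [Ne.symm ha]]
    simp
  rw [lintegral_congr hsplit, lintegral_tsum (f := fun a ω => (X ⁻¹' {a}).indicator 1 ω * f a ω)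
    fun a => (((hind a).mono hF le_rfl).mul ((hf a).mono hG le_rfl)).aemeasurable]
  refine tsum_congr fun a => ?_
  rw [lintegral_mul_eq_lintegral_mul_lintegral_of_independent_measurableSpace hF hG hFG
    (hind a) (hf a), lintegral_indicator_one (hF _ (hXa a))]

theorem lintegral_sum_sq_add_card_mul {X : ι → Ω → ℝ≥0∞} (hX : ∀ j, Measurable (X j))
    (hindep : Pairwise fun j k => IndepFun (X j) (X k) P) {a b : ℝ≥0∞}
    (ha : ∀ j, ∫⁻ ω, X j ω ∂P = a) (hb : ∀ j, ∫⁻ ω, X j ω ^ 2 ∂P = b) (s : Finset ι) :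
    ∫⁻ ω, (∑ j ∈ s, X j ω) ^ 2 ∂P + #s * a ^ 2 = #s * b + #s ^ 2 * a ^ 2 := by
  classical
  have hdiag : ∀ j, ∫⁻ ω, X j ω * X j ω ∂P = b := fun j => by simp_rw [← sq, hb]
  have hoff : ∀ j k, j ≠ k → ∫⁻ ω, X j ω * X k ω ∂P = a ^ 2 := fun j k hjk => by
    rw [lintegral_mul_eq_lintegral_mul_lintegral_of_indepFun'' (hX j).aemeasurable
      (hX k).aemeasurable (hindep hjk), ha, ha, sq]
  have hrow : ∀ j ∈ s, ∫⁻ ω, ∑ k ∈ s, X j ω * X k ω ∂P + a ^ 2 = b + #s * a ^ 2 := by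
    intro j hj
    rw [lintegral_finsetSum' (f := fun k ω => X j ω * X k ω) _
        fun k _ => ((hX j).mul (hX k)).aemeasurable,
      ← add_sum_erase s _ hj, hdiag, sum_congr rfl fun k hk => hoff j k (ne_of_mem_erase hk).symm,
      add_assoc, add_comm _ (a ^ 2), add_sum_erase s (fun _ => a ^ 2) hj, sum_const, nsmul_eq_mul]
  calc ∫⁻ ω, (∑ j ∈ s, X j ω) ^ 2 ∂P + #s * a ^ 2
      = ∑ j ∈ s, (∫⁻ ω, ∑ k ∈ s, X j ω * X k ω ∂P + a ^ 2) := by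
        simp_rw [sq (∑ j ∈ s, X j _), sum_mul_sum]
        rw [lintegral_finsetSum' (f := fun j ω => ∑ k ∈ s, X j ω * X k ω) _ fun j _ =>
          (Finset.measurable_sum _ fun k _ => (hX j).mul (hX k)).aemeasurable, sum_add_distrib,
          sum_const, nsmul_eq_mul]
    _ = ∑ j ∈ s, (b + #s * a ^ 2) := sum_congr rfl hrow
    _ = #s * b + #s ^ 2 * a ^ 2 := by rw [sum_const, nsmul_eq_mul]; ring

theorem sq_lintegral_le_lintegral_sq_mul_measure_ne_zero {f : Ω → ℝ≥0∞} (hf : Measurable f) :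
    (∫⁻ ω, f ω ∂P) ^ 2 ≤ (∫⁻ ω, f ω ^ 2 ∂P) * P {ω | f ω ≠ 0} := by
  set A := {ω | f ω ≠ 0}
  have hA : MeasurableSet A := hf (measurableSet_singleton 0).compl
  have hfA : f * A.indicator 1 = f := by
    ext ω; by_cases h : f ω = 0 <;> simp [A, h]
  have hA2 : ∀ ω, A.indicator (1 : Ω → ℝ≥0∞) ω ^ (2 : ℝ) = A.indicator 1 ω := fun ω => by
    by_cases h : ω ∈ A <;> simp [h]
  have holder := ENNReal.lintegral_mul_le_Lp_mul_Lq P Real.HolderConjugate.two_two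
    hf.aemeasurable (measurable_one.indicator hA).aemeasurable
  simp only [hfA, hA2, lintegral_indicator_one hA, ENNReal.rpow_two] at holder
  calc (∫⁻ ω, f ω ∂P) ^ 2
      ≤ ((∫⁻ ω, f ω ^ 2 ∂P) ^ (1 / 2 : ℝ) * P A ^ (1 / 2 : ℝ)) ^ 2 := by gcongr
    _ = (∫⁻ ω, f ω ^ 2 ∂P) * P A := by
        rw [mul_pow, ← ENNReal.rpow_two, ← ENNReal.rpow_two, ← ENNReal.rpow_mul, ← ENNReal.rpow_mul]
        norm_num

end Moments

theorem le_sq_mul_of_recurrence {m s μ T : ℕ → ℝ} (hm : ∀ i, 0 < m i) (hμ0 : μ 0 = 1)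
    (hμ : ∀ N, μ (N + 1) = m (N + 1) * μ N) (hT0 : T 0 = 1)
    (hT : ∀ N, T (N + 1) + m (N + 1) ^ 2 * μ N = s (N + 1) * μ N + m (N + 1) ^ 2 * T N)
    (N : ℕ) :
    T N ≤ μ N ^ 2 * ((μ N)⁻¹ + ∑ k ∈ range N, s (k + 1) / m (k + 1) ^ 2 * (μ k)⁻¹) := by
  have hμpos : ∀ N, 0 < μ N := fun N => by
    induction N with
    | zero => simp [hμ0]
    | succ N ih => rw [hμ]; exact mul_pos (hm _) ih
  induction N with
  | zero => simp [hT0, hμ0]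
  | succ N ih =>
    have hmN := (hm (N + 1)).ne'
    have hμN := (hμpos N).ne'
    have hstep : μ (N + 1) ^ 2 * ((μ (N + 1))⁻¹ +
          ∑ k ∈ range (N + 1), s (k + 1) / m (k + 1) ^ 2 * (μ k)⁻¹) =
        m (N + 1) ^ 2 * (μ N ^ 2 * ((μ N)⁻¹ + ∑ k ∈ range N, s (k + 1) / m (k + 1) ^ 2 * (μ k)⁻¹))
          + s (N + 1) * μ N + μ (N + 1) - m (N + 1) ^ 2 * μ N := by
      rw [sum_range_succ, hμ]
      field_simp
      ring
    rw [hstep]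
    nlinarith [mul_le_mul_of_nonneg_left ih (sq_nonneg (m (N + 1))), hT N, hμpos (N + 1)]

theorem exp_envWalk_succ {q : ℕ → Measure ℕ} (hm : ∀ i, 0 < measMean (q i) ∧ measMean (q i) < ⊤)
    (N : ℕ) :
    Real.exp (envWalk q (N + 1)) = (measMean (q (N + 1))).toReal * Real.exp (envWalk q N) := by
  rw [envWalk, envWalk, sum_range_succ, Real.exp_add,
    Real.exp_log (ENNReal.toReal_pos (hm _).1.ne' (hm _).2.ne), mul_comm]

section Offspring

variable {Ω : Type*} {ξ : ℕ → ℕ → Ω → ℕ}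

abbrev offspringSigma (ξ : ℕ → ℕ → Ω → ℕ) (s : Set ℕ) : MeasurableSpace Ω :=
  ⨆ p ∈ {p : ℕ × ℕ | p.1 ∈ s}, MeasurableSpace.comap (ξ p.1 p.2) inferInstance

theorem measurable_offspringSigma {s : Set ℕ} {k : ℕ} (hk : k ∈ s) (j : ℕ) :
    Measurable[offspringSigma ξ s] (ξ k j) :=
  measurable_iff_comap_le.mpr <|
    le_iSup₂ (f := fun (p : ℕ × ℕ) (_ : p ∈ {p : ℕ × ℕ | p.1 ∈ s}) =>
      MeasurableSpace.comap (ξ p.1 p.2) inferInstance) (k, j) hk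

theorem measurable_sum_offspringSigma {s : Set ℕ} {k : ℕ} (hk : k ∈ s) (z : ℕ) :
    Measurable[offspringSigma ξ s] fun ω => ∑ j ∈ range z, ξ k j ω :=
  Finset.measurable_sum (m := offspringSigma ξ s) _ fun j _ => measurable_offspringSigma hk j

theorem offspringSigma_mono {s t : Set ℕ} (hst : s ⊆ t) :
    offspringSigma ξ s ≤ offspringSigma ξ t :=
  iSup₂_le fun p hp => measurable_iff_comap_le.mp (measurable_offspringSigma (hst hp) p.2)

theorem offspringSigma_le [mΩ : MeasurableSpace Ω] (hmeas : ∀ k j, Measurable (ξ k j))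
    (s : Set ℕ) :
    offspringSigma ξ s ≤ mΩ :=
  iSup₂_le fun p _ => measurable_iff_comap_le.mp (hmeas p.1 p.2)

theorem indep_offspringSigma [MeasurableSpace Ω] {P : Measure Ω}
    (hmeas : ∀ k j, Measurable (ξ k j))
    (hindep : iIndepFun (fun p : ℕ × ℕ => ξ p.1 p.2) P) {s t : Set ℕ} (hst : Disjoint s t) :
    Indep (offspringSigma ξ s) (offspringSigma ξ t) P :=
  indep_iSup_of_disjoint (m := fun p : ℕ × ℕ => MeasurableSpace.comap (ξ p.1 p.2) inferInstance)
    (fun p => measurable_iff_comap_le.mp (hmeas p.1 p.2)) hindep.iIndep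
    (Set.disjoint_left.mpr fun _ hs ht => Set.disjoint_left.mp hst hs ht)

end Offspring

structure IsBPVE {Ω : Type*} [MeasurableSpace Ω] (P : Measure Ω) (q : ℕ → Measure ℕ)
    (ξ : ℕ → ℕ → Ω → ℕ) (Z : ℕ → Ω → ℕ) : Prop where
  measurable_offspring : ∀ n j, Measurable (ξ n j)
  iIndepFun_offspring : iIndepFun (fun p : ℕ × ℕ => ξ p.1 p.2) P
  map_offspring : ∀ n j, P.map (ξ n j) = q n
  zero : ∀ ω, Z 0 ω = 1
  succ : ∀ n ω, Z (n + 1) ω = ∑ j ∈ range (Z n ω), ξ (n + 1) j ω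

namespace IsBPVE

variable {Ω : Type*} [MeasurableSpace Ω] {P : Measure Ω} {q : ℕ → Measure ℕ}
  {ξ : ℕ → ℕ → Ω → ℕ} {Z : ℕ → Ω → ℕ}

theorem measurable_offspringSigma_Iic (h : IsBPVE P q ξ Z) (N : ℕ) :
    Measurable[offspringSigma ξ (Set.Iic N)] (Z N) := by
  induction N with
  | zero => simpa only [funext h.zero] using measurable_const
  | succ N ih =>
    refine @measurable_to_countable' ℕ Ω _ _ (offspringSigma ξ _) _ fun x => ?_
    have hpre : Z (N + 1) ⁻¹' {x} =
        ⋃ z, Z N ⁻¹' {z} ∩ (fun ω => ∑ j ∈ range z, ξ (N + 1) j ω) ⁻¹' {x} := by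
      ext ω; simp [h.succ]
    have hZN : ∀ z, MeasurableSet[offspringSigma ξ (Set.Iic (N + 1))] (Z N ⁻¹' {z}) := fun z =>
      offspringSigma_mono (Set.Iic_subset_Iic.mpr N.le_succ) _ (ih (measurableSet_singleton z))
    have hsum : ∀ z, MeasurableSet[offspringSigma ξ (Set.Iic (N + 1))]
        ((fun ω => ∑ j ∈ range z, ξ (N + 1) j ω) ⁻¹' {x}) := fun z =>
      measurable_sum_offspringSigma Set.self_mem_Iic z (measurableSet_singleton x)
    rw [hpre]
    exact MeasurableSet.iUnion fun z => (hZN z).inter (hsum z)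

theorem measurable (h : IsBPVE P q ξ Z) (N : ℕ) : Measurable (Z N) :=
  (h.measurable_offspringSigma_Iic N).mono (offspringSigma_le h.measurable_offspring _) le_rfl

theorem lintegral_comp_succ (h : IsBPVE P q ξ Z) (N : ℕ) (g : ℕ → ℝ≥0∞) :
    ∫⁻ ω, g (Z (N + 1) ω) ∂P =
      ∑' z, P (Z N ⁻¹' {z}) * ∫⁻ ω, g (∑ j ∈ range z, ξ (N + 1) j ω) ∂P := by
  simp_rw [h.succ]
  exact lintegral_comp_eq_tsum_of_indep (offspringSigma_le h.measurable_offspring _)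
    (offspringSigma_le h.measurable_offspring _)
    (indep_offspringSigma h.measurable_offspring h.iIndepFun_offspring
      (Set.disjoint_singleton_right.mpr (by simp)))
    (h.measurable_offspringSigma_Iic N) fun z => (measurable_of_countable g).comp
      (measurable_sum_offspringSigma (Set.mem_singleton _) z)

theorem lintegral_comp_offspring (h : IsBPVE P q ξ Z) (n j : ℕ) (g : ℕ → ℝ≥0∞) :
    ∫⁻ ω, g (ξ n j ω) ∂P = ∑' y, g y * q n {y} := by
  rw [← lintegral_map (measurable_of_countable g) (h.measurable_offspring n j),
    h.map_offspring, lintegral_countable']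

theorem lintegral_offspring_sum (h : IsBPVE P q ξ Z) (n z : ℕ) :
    ∫⁻ ω, ((∑ j ∈ range z, ξ n j ω : ℕ) : ℝ≥0∞) ∂P = z * measMean (q n) := by
  push_cast
  rw [lintegral_finsetSum' (f := fun j ω => (ξ n j ω : ℝ≥0∞)) _ fun j _ =>
    ((measurable_of_countable _).comp (h.measurable_offspring n j)).aemeasurable]
  simp [h.lintegral_comp_offspring, measMean]

theorem lintegral_offspring_sum_sq_add (h : IsBPVE P q ξ Z) (n z : ℕ) :
    ∫⁻ ω, ((∑ j ∈ range z, ξ n j ω : ℕ) : ℝ≥0∞) ^ 2 ∂P + z * measMean (q n) ^ 2 =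
      z * measSecondMoment (q n) + z ^ 2 * measMean (q n) ^ 2 := by
  push_cast
  simpa only [card_range] using lintegral_sum_sq_add_card_mul (X := fun j ω => (ξ n j ω : ℝ≥0∞))
    (fun j => (measurable_of_countable _).comp (h.measurable_offspring n j))
    (fun j k hjk => (h.iIndepFun_offspring.indepFun ((Prod.mk_right_injective n).ne hjk)).comp
      (measurable_of_countable _) (measurable_of_countable _))
    (a := measMean (q n)) (fun j => h.lintegral_comp_offspring n j Nat.cast)
    (b := measSecondMoment (q n)) (fun j => h.lintegral_comp_offspring n j fun y => (y : ℝ≥0∞) ^ 2)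
    (range z)

theorem lintegral_succ (h : IsBPVE P q ξ Z) (N : ℕ) :
    ∫⁻ ω, (Z (N + 1) ω : ℝ≥0∞) ∂P = measMean (q (N + 1)) * ∫⁻ ω, (Z N ω : ℝ≥0∞) ∂P := by
  rw [h.lintegral_comp_succ N (fun y => (y : ℝ≥0∞)),
    lintegral_comp_eq_tsum (h.measurable N) (fun y => (y : ℝ≥0∞)), ← ENNReal.tsum_mul_left]
  refine tsum_congr fun z => ?_
  rw [h.lintegral_offspring_sum]
  ring

theorem lintegral_sq_succ_add (h : IsBPVE P q ξ Z) (N : ℕ) :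
    ∫⁻ ω, (Z (N + 1) ω : ℝ≥0∞) ^ 2 ∂P + measMean (q (N + 1)) ^ 2 * ∫⁻ ω, (Z N ω : ℝ≥0∞) ∂P =
      measSecondMoment (q (N + 1)) * ∫⁻ ω, (Z N ω : ℝ≥0∞) ∂P +
        measMean (q (N + 1)) ^ 2 * ∫⁻ ω, (Z N ω : ℝ≥0∞) ^ 2 ∂P := by
  rw [h.lintegral_comp_succ N (fun y => (y : ℝ≥0∞) ^ 2),
    lintegral_comp_eq_tsum (h.measurable N) (fun y => (y : ℝ≥0∞)),
    lintegral_comp_eq_tsum (h.measurable N) (fun y => (y : ℝ≥0∞) ^ 2),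
    ← ENNReal.tsum_mul_left, ← ENNReal.tsum_mul_left, ← ENNReal.tsum_mul_left,
    ← ENNReal.tsum_add, ← ENNReal.tsum_add]
  refine tsum_congr fun z => ?_
  calc _ = P (Z N ⁻¹' {z}) * (∫⁻ ω, ((∑ j ∈ range z, ξ (N + 1) j ω : ℕ) : ℝ≥0∞) ^ 2 ∂P +
        z * measMean (q (N + 1)) ^ 2) := by ring
    _ = _ := by rw [h.lintegral_offspring_sum_sq_add]; ring

theorem lintegral_ne_top [IsFiniteMeasure P] (h : IsBPVE P q ξ Z)
    (hm : ∀ i, measMean (q i) ≠ ⊤) (N : ℕ) : ∫⁻ ω, (Z N ω : ℝ≥0∞) ∂P ≠ ⊤ := by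
  induction N with
  | zero => simp [h.zero]
  | succ N ih => rw [h.lintegral_succ]; exact ENNReal.mul_ne_top (hm _) ih

theorem lintegral_sq_ne_top [IsFiniteMeasure P] (h : IsBPVE P q ξ Z)
    (hm : ∀ i, measMean (q i) ≠ ⊤) (hs : ∀ i, measSecondMoment (q i) ≠ ⊤) (N : ℕ) :
    ∫⁻ ω, (Z N ω : ℝ≥0∞) ^ 2 ∂P ≠ ⊤ := by
  induction N with
  | zero => simp [h.zero]
  | succ N ih =>
    refine ne_top_of_le_ne_top ?_ (le_self_add.trans_eq (h.lintegral_sq_succ_add N))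
    exact ENNReal.add_ne_top.mpr ⟨ENNReal.mul_ne_top (hs _) (h.lintegral_ne_top hm N),
      ENNReal.mul_ne_top (ENNReal.pow_ne_top (hm _)) ih⟩

theorem toReal_lintegral_eq_exp_envWalk [IsProbabilityMeasure P] (h : IsBPVE P q ξ Z)
    (hm : ∀ i, 0 < measMean (q i) ∧ measMean (q i) < ⊤) (N : ℕ) :
    (∫⁻ ω, (Z N ω : ℝ≥0∞) ∂P).toReal = Real.exp (envWalk q N) := by
  induction N with
  | zero => simp [h.zero, envWalk]
  | succ N ih => rw [h.lintegral_succ, ENNReal.toReal_mul, ih, exp_envWalk_succ hm]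

theorem toReal_lintegral_sq_succ_add [IsProbabilityMeasure P] (h : IsBPVE P q ξ Z)
    (hm : ∀ i, 0 < measMean (q i) ∧ measMean (q i) < ⊤) (hs : ∀ i, measSecondMoment (q i) ≠ ⊤)
    (N : ℕ) :
    (∫⁻ ω, (Z (N + 1) ω : ℝ≥0∞) ^ 2 ∂P).toReal +
        (measMean (q (N + 1))).toReal ^ 2 * Real.exp (envWalk q N) =
      (measSecondMoment (q (N + 1))).toReal * Real.exp (envWalk q N) +
        (measMean (q (N + 1))).toReal ^ 2 * (∫⁻ ω, (Z N ω : ℝ≥0∞) ^ 2 ∂P).toReal := by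
  have hmT : ∀ i, measMean (q i) ≠ ⊤ := fun i => (hm i).2.ne
  have hm2 := ENNReal.pow_ne_top (n := 2) (hmT (N + 1))
  have hZ := h.lintegral_ne_top hmT N
  have hZ2 := h.lintegral_sq_ne_top hmT hs N
  have := congrArg ENNReal.toReal (h.lintegral_sq_succ_add N)
  rwa [ENNReal.toReal_add (h.lintegral_sq_ne_top hmT hs _) (ENNReal.mul_ne_top hm2 hZ),
    ENNReal.toReal_add (ENNReal.mul_ne_top (hs _) hZ) (ENNReal.mul_ne_top hm2 hZ2),
    ENNReal.toReal_mul, ENNReal.toReal_mul, ENNReal.toReal_mul, ENNReal.toReal_pow,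
    h.toReal_lintegral_eq_exp_envWalk hm] at this

theorem exp_envWalk_sq_le [IsProbabilityMeasure P] (h : IsBPVE P q ξ Z)
    (hm : ∀ i, 0 < measMean (q i) ∧ measMean (q i) < ⊤) (hs : ∀ i, measSecondMoment (q i) ≠ ⊤)
    (N : ℕ) :
    Real.exp (envWalk q N) ^ 2 ≤
      (∫⁻ ω, (Z N ω : ℝ≥0∞) ^ 2 ∂P).toReal * (P {ω | 0 < Z N ω}).toReal := by
  have hPZ := sq_lintegral_le_lintegral_sq_mul_measure_ne_zero (P := P)
    ((measurable_of_countable (Nat.cast : ℕ → ℝ≥0∞)).comp (h.measurable N))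
  simp only [Function.comp_apply, ne_eq, Nat.cast_eq_zero, ← pos_iff_ne_zero] at hPZ
  rw [← h.toReal_lintegral_eq_exp_envWalk hm, ← ENNReal.toReal_pow, ← ENNReal.toReal_mul]
  exact ENNReal.toReal_mono
    (ENNReal.mul_ne_top (h.lintegral_sq_ne_top (fun i => (hm i).2.ne) hs N) (measure_ne_top P _))
    hPZ

end IsBPVE

theorem statement5_general
    {Ω : Type*} [MeasurableSpace Ω] (P : Measure Ω) [IsProbabilityMeasure P]
    (q : ℕ → Measure ℕ)
    (hm : ∀ i, 0 < measMean (q i) ∧ measMean (q i) < ⊤)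
    (hsecond : ∀ i, ∑' y : ℕ, (y : ℝ≥0∞) ^ 2 * q i {y} < ⊤)
    (ξ : ℕ → ℕ → Ω → ℕ) (hmeas : ∀ n j, Measurable (ξ n j))
    (hindep : iIndepFun (fun p : ℕ × ℕ => ξ p.1 p.2) P)
    (hdist : ∀ n j, P.map (ξ n j) = q n)
    (Z : ℕ → Ω → ℕ) (hZ0 : ∀ ω, Z 0 ω = 1)
    (hZrec : ∀ n ω, Z (n + 1) ω = ∑ j ∈ Finset.range (Z n ω), ξ (n + 1) j ω)
    (n : ℕ) :
    ENNReal.ofReal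
        ((Real.exp (-(envWalk q n)) +
            ∑ k ∈ Finset.range n, measEta (q (k + 1)) * Real.exp (-(envWalk q k)))⁻¹)
      ≤ P {ω | 0 < Z n ω} := by
  have h : IsBPVE P q ξ Z := ⟨hmeas, hindep, hdist, hZ0, hZrec⟩
  have hs : ∀ i, measSecondMoment (q i) ≠ ⊤ := fun i => (hsecond i).ne
  set T : ℕ → ℝ := fun N => (∫⁻ ω, (Z N ω : ℝ≥0∞) ^ 2 ∂P).toReal
  set C := Real.exp (-(envWalk q n)) +
    ∑ k ∈ range n, measEta (q (k + 1)) * Real.exp (-(envWalk q k))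
  set p := (P {ω | 0 < Z n ω}).toReal
  have hTC : T n ≤ Real.exp (envWalk q n) ^ 2 * C := by
    simp only [C, Real.exp_neg]
    exact le_sq_mul_of_recurrence (T := T)
      (μ := fun N => Real.exp (envWalk q N)) (s := fun i => (measSecondMoment (q i)).toReal)
      (fun i => ENNReal.toReal_pos (hm i).1.ne' (hm i).2.ne) (by simp [envWalk])
      (exp_envWalk_succ hm) (by simp [T, h.zero]) (h.toReal_lintegral_sq_succ_add hm hs) n
  have hCp : 1 ≤ C * p := by
    refine le_of_mul_le_mul_left ?_ (pow_pos (Real.exp_pos (envWalk q n)) 2)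
    calc Real.exp (envWalk q n) ^ 2 * 1
        ≤ T n * p := (mul_one _).trans_le (h.exp_envWalk_sq_le hm hs n)
      _ ≤ Real.exp (envWalk q n) ^ 2 * C * p :=
        mul_le_mul_of_nonneg_right hTC ENNReal.toReal_nonneg
      _ = _ := mul_assoc _ _ _
  have hC : 0 < C := lt_of_mul_lt_mul_right (by linarith : 0 * p < C * p) ENNReal.toReal_nonneg
  exact ENNReal.ofReal_le_of_le_toReal ((inv_le_iff_one_le_mul₀' hC).mpr hCp)

/-- For a branching process `(Z_n)` in the varying environment `(q_1, q_2, …)`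
with `Z_0 = 1` and offspring laws having finite second moments, for every `n ≥ 1`,
`P(Z_n > 0) ≥ (e^{-S_n} + Σ_{k=0}^{n-1} η(q_{k+1}) e^{-S_k})⁻¹`. -/
theorem statement5
    {Ω : Type*} [MeasurableSpace Ω] (P : Measure Ω) [IsProbabilityMeasure P]
    (q : ℕ → Measure ℕ) [∀ i, IsProbabilityMeasure (q i)]
    (hm : ∀ i, 0 < measMean (q i) ∧ measMean (q i) < ⊤)
    (hsecond : ∀ i, ∑' y : ℕ, (y : ℝ≥0∞) ^ 2 * q i {y} < ⊤)
    (ξ : ℕ → ℕ → Ω → ℕ) (hmeas : ∀ n j, Measurable (ξ n j))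
    (hindep : iIndepFun (fun p : ℕ × ℕ => ξ p.1 p.2) P)
    (hdist : ∀ n j, P.map (ξ n j) = q n)
    (Z : ℕ → Ω → ℕ) (hZ0 : ∀ ω, Z 0 ω = 1)
    (hZrec : ∀ n ω, Z (n + 1) ω = ∑ j ∈ Finset.range (Z n ω), ξ (n + 1) j ω)
    (n : ℕ) (hn : 1 ≤ n) :
    ENNReal.ofReal
        ((Real.exp (-(envWalk q n)) +
            ∑ k ∈ Finset.range n, measEta (q (k + 1)) * Real.exp (-(envWalk q k)))⁻¹)
      ≤ P {ω | 0 < Z n ω} :=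
  statement5_general P q hm hsecond ξ hmeas hindep hdist Z hZ0 hZrec n
end

section
/- Let (Z_n) be a branching process in the varying environment (q_1, q_2, …). Write P_z for the law of the process started from Z_0 = z. Then for all integers z ≥ 1, 0 ≤ v ≤ n and every c > 0, P_z(Z_v > cz, Z_n > 0) ≤ z · P_1(Z_v > c, Z_n > 0) + z · P_1(Z_n > 0) · P_{z−1}(Z_v > (z−1)c). (Either one of the z founding individuals has surviving descendance at time n and more than c descendants at time v, or one has surviving descendance at time n while the other z − 1 together have more than (z−1)c descendants at time v.) -/
open MeasureTheory ProbabilityTheory Finset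

/-!
All the processes `Z z` live on one array of offspring numbers, in which the descendants of
founder `i` form the block `[Z i k, Z (i + 1) k)` of generation `k`. Given the family sizes up to
generation `n`, the family sizes in generation `n + 1` are sums of fresh offspring numbers over
disjoint windows, so by induction on `n` the `z` families are independent copies of `Z 1` (the
branching property).

If `Z_n > 0`, some family `i` survives up to time `n`. Either it has more than `c` members at time
`v`, or the other `z - 1` families, which are independent of it and together distributed as
`Z (z - 1)`, have more than `(z - 1) c` members at time `v`. A union bound over `i` gives the claim.
-/

namespace BPVE

theorem measure_pi_lt_sum_and_exists_mem_le {α : Type*} [MeasurableSpace α] (ν : Measure α)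
    [IsProbabilityMeasure ν] (X : α → ℝ) (S : Set α) (c : ℝ) (m : ℕ) :
    Measure.pi (fun _ : Fin (m + 1) => ν) {x | c * (m + 1) < ∑ i, X (x i) ∧ ∃ i, x i ∈ S}
      ≤ (m + 1) * ν {a | c < X a ∧ a ∈ S}
        + (m + 1) * ν S * Measure.pi (fun _ : Fin m => ν) {y | m * c < ∑ j, X (y j)} := by
  set A := {a | c < X a ∧ a ∈ S}
  set B := {y : Fin m → α | m * c < ∑ j, X (y j)}
  let e := MeasurableEquiv.piFinSuccAbove (fun _ : Fin (m + 1) => α)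
  have hcover : {x | c * (m + 1) < ∑ i, X (x i) ∧ ∃ i, x i ∈ S}
      ⊆ ⋃ i, e i ⁻¹' (A ×ˢ Set.univ ∪ S ×ˢ B) := by
    rintro x ⟨hsum, i, hi⟩
    refine Set.mem_iUnion.2 ⟨i, ?_⟩
    by_cases hxi : c < X (x i)
    · exact Or.inl ⟨⟨hxi, hi⟩, trivial⟩
    · refine Or.inr ⟨hi, ?_⟩
      show m * c < ∑ j, X (x (i.succAbove j))
      rw [Fin.sum_univ_succAbove _ i] at hsum
      linarith [not_lt.1 hxi]
  have hpiece : ∀ i, Measure.pi (fun _ => ν) (e i ⁻¹' (A ×ˢ Set.univ ∪ S ×ˢ B))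
      ≤ ν A + ν S * Measure.pi (fun _ : Fin m => ν) B := by
    intro i
    rw [← MeasurableEquiv.map_apply, (measurePreserving_piFinSuccAbove (fun _ => ν) i).map_eq]
    refine (measure_union_le _ _).trans ?_
    rw [Measure.prod_prod, Measure.prod_prod, measure_univ, mul_one]
  calc _ ≤ _ := measure_mono hcover
    _ ≤ _ := measure_iUnion_fintype_le _ _
    _ ≤ ∑ _i : Fin (m + 1), (ν A + ν S * Measure.pi (fun _ : Fin m => ν) B) :=
      sum_le_sum fun i _ => hpiece i
    _ = _ := by
      rw [sum_const, card_univ, Fintype.card_fin, nsmul_eq_mul, mul_add, mul_assoc]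
      push_cast
      rfl

theorem measurable_sum_range {Ω : Type*} {m : MeasurableSpace Ω} {N : Ω → ℕ}
    {f : ℕ → Ω → ℕ} (hN : Measurable N) (hf : ∀ j, Measurable (f j)) :
    Measurable fun ω => ∑ j ∈ range (N ω), f j ω :=
  (measurable_from_prod_countable_left (f := fun p : Ω × ℕ => ∑ j ∈ range p.2, f j p.1)
    fun y => Finset.measurable_sum (f := f) (range y) fun j _ => hf j).comp
      (measurable_id.prodMk hN)

/-- The children in each generation are numbered consecutively in the order of their parents, so
that the descendants in generation `k` of founder `i` are the individuals
`Z i k, …, Z (i + 1) k - 1` of the process started from any `z > i` founders. -/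
structure IsBranchingProcess {Ω : Type*} (ξ : ℕ → ℕ → Ω → ℕ) (Z : ℕ → ℕ → Ω → ℕ) : Prop where
  zero : ∀ z ω, Z z 0 ω = z
  succ : ∀ z k ω, Z z (k + 1) ω = ∑ j ∈ range (Z z k ω), ξ (k + 1) j ω

def familySizes {Ω : Type*} (Z : ℕ → ℕ → Ω → ℕ) (z n : ℕ) (ω : Ω) (i : Fin z) (k : Fin (n + 1)) :
    ℕ :=
  Z (i + 1) k ω - Z i k ω

def descendantsEq {Ω : Type*} (Z : ℕ → ℕ → Ω → ℕ) (z n : ℕ) (t : ℕ → ℕ → ℕ) : Set Ω :=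
  {ω | ∀ i < z, ∀ k ≤ n, Z (i + 1) k ω = Z i k ω + t i k}

def windowSumEq {Ω : Type*} (ξ : ℕ → ℕ → Ω → ℕ) (m u a d : ℕ) : Set Ω :=
  {ω | ∑ j ∈ Ico u (u + a), ξ m j ω = d}

namespace IsBranchingProcess

variable {Ω : Type*} {ξ : ℕ → ℕ → Ω → ℕ} {Z : ℕ → ℕ → Ω → ℕ}

theorem zero_left (h : IsBranchingProcess ξ Z) (k : ℕ) (ω : Ω) : Z 0 k ω = 0 := by
  induction k with
  | zero => exact h.zero 0 ω
  | succ k ih => rw [h.succ, ih, range_zero, sum_empty]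

theorem monotone_left (h : IsBranchingProcess ξ Z) (k : ℕ) (ω : Ω) :
    Monotone fun z => Z z k ω := by
  intro z z' hzz'
  induction k with
  | zero => simpa only [h.zero] using hzz'
  | succ k ih =>
    simp only [h.succ]
    exact sum_le_sum_of_subset (range_subset_range.2 ih)

theorem sum_familySizes (h : IsBranchingProcess ξ Z) (z n : ℕ) (ω : Ω) (k : Fin (n + 1)) :
    ∑ i, familySizes Z z n ω i k = Z z k ω := by
  simp only [familySizes]
  rw [Fin.sum_univ_eq_sum_range (fun i => Z (i + 1) k ω - Z i k ω),
    sum_range_tsub (h.monotone_left k ω), h.zero_left, Nat.sub_zero]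

theorem succ_eq_add_sum_Ico (h : IsBranchingProcess ξ Z) {i n a : ℕ} {ω : Ω}
    (hi : Z (i + 1) n ω = Z i n ω + a) :
    Z (i + 1) (n + 1) ω = Z i (n + 1) ω + ∑ j ∈ Ico (Z i n ω) (Z i n ω + a), ξ (n + 1) j ω := by
  rw [h.succ, h.succ, hi, sum_range_add_sum_Ico _ (Nat.le_add_right _ _)]

theorem eq_sum_of_mem_descendantsEq (h : IsBranchingProcess ξ Z) {z n : ℕ} {t : ℕ → ℕ → ℕ}
    {ω : Ω} (hω : ω ∈ descendantsEq Z z n t) {i k : ℕ} (hi : i ≤ z) (hk : k ≤ n) :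
    Z i k ω = ∑ l ∈ range i, t l k := by
  induction i with
  | zero => rw [h.zero_left, sum_range_zero]
  | succ i ih => rw [hω i hi k hk, ih (by omega), sum_range_succ]

theorem mem_descendantsEq_zero (h : IsBranchingProcess ξ Z) {z : ℕ} {t : ℕ → ℕ → ℕ} {ω : Ω} :
    ω ∈ descendantsEq Z z 0 t ↔ ∀ i < z, t i 0 = 1 := by
  simp only [descendantsEq, Nat.le_zero, forall_eq, h.zero, Set.mem_ofPred_eq]
  exact forall₂_congr fun i _ => by omega

theorem descendantsEq_succ (h : IsBranchingProcess ξ Z) (z n : ℕ) (t : ℕ → ℕ → ℕ) :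
    descendantsEq Z z (n + 1) t = descendantsEq Z z n t ∩
      ⋂ i ∈ range z, windowSumEq ξ (n + 1) (∑ l ∈ range i, t l n) (t i n) (t i (n + 1)) := by
  ext ω
  simp only [Set.mem_inter_iff, Set.mem_iInter, mem_range, windowSumEq, Set.mem_ofPred_eq]
  constructor
  · intro hω
    have hω' : ω ∈ descendantsEq Z z n t := fun i hi k hk => hω i hi k (by omega)
    refine ⟨hω', fun i hi => ?_⟩
    have hstep := h.succ_eq_add_sum_Ico (hω' i hi n le_rfl)
    rw [h.eq_sum_of_mem_descendantsEq hω' hi.le le_rfl] at hstep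
    have := hω i hi (n + 1) le_rfl
    omega
  · rintro ⟨hω, hwin⟩ i hi k hk
    obtain hk | rfl : k ≤ n ∨ k = n + 1 := by omega
    · exact hω i hi k hk
    · rw [h.succ_eq_add_sum_Ico (hω i hi n le_rfl),
        h.eq_sum_of_mem_descendantsEq hω hi.le le_rfl, hwin i hi]

theorem exists_familySizes_pos_iff (h : IsBranchingProcess ξ Z) {z n : ℕ} {ω : Ω}
    {k : Fin (n + 1)} : (∃ i, 0 < familySizes Z z n ω i k) ↔ 0 < Z z k ω := by
  rw [← h.sum_familySizes, sum_pos_iff]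
  simp only [mem_univ, true_and]

theorem preimage_familySizes_singleton (h : IsBranchingProcess ξ Z) (z n : ℕ)
    (t : ℕ → ℕ → ℕ) :
    familySizes Z z n ⁻¹' {fun (i : Fin z) (k : Fin (n + 1)) => t i k} = descendantsEq Z z n t := by
  ext ω
  simp only [Set.mem_preimage, Set.mem_singleton_iff, funext_iff, familySizes, descendantsEq,
    Set.mem_ofPred_eq, Nat.sub_eq_iff_eq_add' (h.monotone_left _ ω (Nat.le_succ _))]
  exact ⟨fun hω i hi k hk => hω ⟨i, hi⟩ ⟨k, by omega⟩, fun hω i k => hω i i.2 k (by omega)⟩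

theorem preimage_path_singleton (h : IsBranchingProcess ξ Z) (n : ℕ) (s : ℕ → ℕ) :
    (fun ω (k : Fin (n + 1)) => Z 1 k ω) ⁻¹' {fun (k : Fin (n + 1)) => s k}
      = descendantsEq Z 1 n fun _ => s := by
  ext ω
  simp only [Set.mem_preimage, Set.mem_singleton_iff, funext_iff, descendantsEq,
    Set.mem_ofPred_eq, Nat.lt_one_iff, forall_eq, zero_add, h.zero_left]
  exact ⟨fun hω k hk => hω ⟨k, by omega⟩, fun hω k => hω k (by omega)⟩

theorem measurable {m : MeasurableSpace Ω} (h : IsBranchingProcess ξ Z) {n : ℕ}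
    (hξ : ∀ k ≤ n, ∀ j, Measurable (ξ k j)) (z : ℕ) {k : ℕ} (hk : k ≤ n) :
    Measurable (Z z k) := by
  induction k with
  | zero => simpa only [funext (h.zero z)] using measurable_const
  | succ k ih =>
    simpa only [funext (h.succ z k)] using
      measurable_sum_range (ih (by omega)) (hξ (k + 1) hk)

theorem measurableSet_descendantsEq {m : MeasurableSpace Ω} (h : IsBranchingProcess ξ Z)
    {n : ℕ} (hξ : ∀ k ≤ n, ∀ j, Measurable (ξ k j)) (z : ℕ) (t : ℕ → ℕ → ℕ) :
    MeasurableSet (descendantsEq Z z n t) := by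
  simp only [descendantsEq, Set.ofPred_forall]
  exact .iInter fun i => .iInter fun _ => .iInter fun k => .iInter fun hk =>
    measurableSet_eq_fun (h.measurable hξ _ hk) ((h.measurable hξ _ hk).add_const _)

end IsBranchingProcess

section Independence

variable {Ω : Type*} {ξ : ℕ → ℕ → Ω → ℕ}

abbrev offspringSigma (ξ : ℕ → ℕ → Ω → ℕ) (S : Set (ℕ × ℕ)) : MeasurableSpace Ω :=
  ⨆ r ∈ S, MeasurableSpace.comap (ξ r.1 r.2) inferInstance

theorem measurable_offspringSigma {S : Set (ℕ × ℕ)} {k j : ℕ} (h : (k, j) ∈ S) :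
    Measurable[offspringSigma ξ S] (ξ k j) :=
  measurable_iff_comap_le.2 (le_iSup₂ (f := fun r (_ : r ∈ S) =>
    MeasurableSpace.comap (ξ r.1 r.2) inferInstance) (k, j) h)

theorem offspringSigma_mono {S T : Set (ℕ × ℕ)} (h : S ⊆ T) :
    offspringSigma ξ S ≤ offspringSigma ξ T :=
  biSup_mono h

theorem indep_offspringSigma [MeasurableSpace Ω] {P : Measure Ω}
    (hmeas : ∀ k j, Measurable (ξ k j))
    (hindep : iIndepFun (fun r : ℕ × ℕ => ξ r.1 r.2) P) {S T : Set (ℕ × ℕ)}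
    (hST : Disjoint S T) : Indep (offspringSigma ξ S) (offspringSigma ξ T) P := by
  have hiIndep :=
    (iIndepFun_iff_iIndep (fun _ => inferInstance) (fun r : ℕ × ℕ => ξ r.1 r.2) P).1 hindep
  have hindepST := indep_iSup_of_disjoint (fun r => (hmeas r.1 r.2).comap_le) hiIndep hST
  exact hindepST

theorem measurableSet_windowSumEq {S : Set (ℕ × ℕ)} {m u a : ℕ}
    (hS : ∀ j ∈ Ico u (u + a), (m, j) ∈ S) (d : ℕ) :
    MeasurableSet[offspringSigma ξ S] (windowSumEq ξ m u a d) :=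
  (Finset.measurable_sum _ fun j hj => measurable_offspringSigma (hS j hj))
    (measurableSet_singleton d)

theorem measure_inter_iInter_windowSumEq [MeasurableSpace Ω] {P : Measure Ω}
    (hmeas : ∀ k j, Measurable (ξ k j))
    (hindep : iIndepFun (fun r : ℕ × ℕ => ξ r.1 r.2) P) {n : ℕ} {A : Set Ω}
    (hA : MeasurableSet[offspringSigma ξ {r | r.1 ≤ n}] A) (a d : ℕ → ℕ) (z : ℕ) :
    P (A ∩ ⋂ i ∈ range z, windowSumEq ξ (n + 1) (∑ l ∈ range i, a l) (a i) (d i))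
      = P A * ∏ i ∈ range z, P (windowSumEq ξ (n + 1) (∑ l ∈ range i, a l) (a i) (d i)) := by
  induction z with
  | zero => simp
  | succ z ih =>
    set s := ∑ l ∈ range z, a l
    let S : Set (ℕ × ℕ) := {r | r.1 ≤ n ∨ r.1 = n + 1 ∧ r.2 < s}
    let T : Set (ℕ × ℕ) := {r | r.1 = n + 1 ∧ s ≤ r.2}
    have hST : Disjoint S T := Set.disjoint_left.2 fun r hS hT => by
      simp only [S, T, Set.mem_ofPred_eq] at hS hT
      omega
    have hmeasS : MeasurableSet[offspringSigma ξ S]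
        (A ∩ ⋂ i ∈ range z, windowSumEq ξ (n + 1) (∑ l ∈ range i, a l) (a i) (d i)) := by
      refine (offspringSigma_mono (fun r hr => Or.inl hr) _ hA).inter
        (Finset.measurableSet_biInter _ fun i hi => measurableSet_windowSumEq (fun j hj => ?_) _)
      have : ∑ l ∈ range (i + 1), a l ≤ s :=
        sum_le_sum_of_subset (range_subset_range.2 (mem_range.1 hi))
      rw [sum_range_succ] at this
      exact Or.inr ⟨rfl, by simp only [mem_Ico] at hj; omega⟩
    have hmeasT : MeasurableSet[offspringSigma ξ T] (windowSumEq ξ (n + 1) s (a z) (d z)) :=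
      measurableSet_windowSumEq (fun j hj => show _ ∧ _ from ⟨rfl, (mem_Ico.1 hj).1⟩) _
    rw [prod_range_succ, ← mul_assoc, ← ih, ← (Indep_iff _ _ _).1
      (indep_offspringSigma hmeas hindep hST) _ _ hmeasS hmeasT, range_add_one,
      Finset.set_biInter_insert, Set.inter_left_comm, Set.inter_comm _ (windowSumEq _ _ _ _ _)]

theorem measure_windowSumEq [MeasurableSpace Ω] {P : Measure Ω} [IsProbabilityMeasure P]
    {q : ℕ → Measure ℕ} (hmeas : ∀ k j, Measurable (ξ k j))
    (hindep : iIndepFun (fun r : ℕ × ℕ => ξ r.1 r.2) P) (hdist : ∀ k j, P.map (ξ k j) = q k)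
    (m u a d : ℕ) :
    P (windowSumEq ξ m u a d) = P (windowSumEq ξ m 0 a d) := by
  let V : ℕ → Ω → Fin a → ℕ := fun u ω j => ξ m (u + j) ω
  have hV : ∀ u, Measurable (V u) := fun u => measurable_pi_lambda _ fun j => hmeas _ _
  have hlaw : ∀ u, P.map (V u) = Measure.pi fun j : Fin a => P.map (ξ m j) := by
    intro u
    have hinj : Function.Injective fun j : Fin a => (m, u + (j : ℕ)) := fun j j' hjj' =>
      Fin.ext (by simpa using hjj')
    rw [(iIndepFun_iff_map_fun_eq_pi_map fun j => (hmeas _ _).aemeasurable).1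
      (hindep.precomp hinj)]
    congr 1
    funext j
    rw [hdist, hdist]
  have hwindow : ∀ u, windowSumEq ξ m u a d = V u ⁻¹' {y | ∑ j, y j = d} := by
    intro u
    ext ω
    simp only [windowSumEq, Set.mem_ofPred_eq, Set.mem_preimage, V, sum_Ico_eq_sum_range,
      Nat.add_sub_cancel_left, Fin.sum_univ_eq_sum_range (fun j => ξ m (u + j) ω)]
  rw [hwindow, hwindow, ← Measure.map_apply (hV u) .of_discrete,
    ← Measure.map_apply (hV 0) .of_discrete, hlaw, hlaw]

end Independence

namespace IsBranchingProcess

variable {Ω : Type*} [MeasurableSpace Ω] {P : Measure Ω} [IsProbabilityMeasure P]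
  {q : ℕ → Measure ℕ} {ξ : ℕ → ℕ → Ω → ℕ} {Z : ℕ → ℕ → Ω → ℕ}

theorem measure_descendantsEq_succ (h : IsBranchingProcess ξ Z)
    (hmeas : ∀ k j, Measurable (ξ k j)) (hindep : iIndepFun (fun r : ℕ × ℕ => ξ r.1 r.2) P)
    (hdist : ∀ k j, P.map (ξ k j) = q k) (z n : ℕ) (t : ℕ → ℕ → ℕ) :
    P (descendantsEq Z z (n + 1) t) = P (descendantsEq Z z n t) *
      ∏ i ∈ range z, P (windowSumEq ξ (n + 1) 0 (t i n) (t i (n + 1))) := by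
  have hE := h.measurableSet_descendantsEq (m := offspringSigma ξ {r | r.1 ≤ n})
    (fun k hk j => measurable_offspringSigma hk) z t
  rw [h.descendantsEq_succ, measure_inter_iInter_windowSumEq hmeas hindep hE]
  simp_rw [measure_windowSumEq hmeas hindep hdist]

theorem measure_descendantsEq_zero (h : IsBranchingProcess ξ Z) (z : ℕ) (t : ℕ → ℕ → ℕ) :
    P (descendantsEq Z z 0 t) = if ∀ i < z, t i 0 = 1 then 1 else 0 := by
  split_ifs with ht
  · rw [Set.eq_univ_of_forall fun _ => h.mem_descendantsEq_zero.2 ht, measure_univ]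
  · rw [Set.eq_empty_of_forall_notMem fun _ hω => ht (h.mem_descendantsEq_zero.1 hω),
      measure_empty]

theorem measure_descendantsEq (h : IsBranchingProcess ξ Z)
    (hmeas : ∀ k j, Measurable (ξ k j)) (hindep : iIndepFun (fun r : ℕ × ℕ => ξ r.1 r.2) P)
    (hdist : ∀ k j, P.map (ξ k j) = q k) (z n : ℕ) (t : ℕ → ℕ → ℕ) :
    P (descendantsEq Z z n t) = ∏ i ∈ range z, P (descendantsEq Z 1 n fun _ => t i) := by
  induction n with
  | zero =>
    simp only [h.measure_descendantsEq_zero, prod_boole, mem_range, Nat.lt_one_iff, forall_eq]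
  | succ n ih =>
    rw [h.measure_descendantsEq_succ hmeas hindep hdist, ih, ← prod_mul_distrib]
    refine prod_congr rfl fun i _ => ?_
    rw [h.measure_descendantsEq_succ hmeas hindep hdist, prod_range_one]

theorem measurable_path (h : IsBranchingProcess ξ Z)
    (hmeas : ∀ k j, Measurable (ξ k j)) (n : ℕ) :
    Measurable fun ω (k : Fin (n + 1)) => Z 1 k ω :=
  measurable_pi_lambda _ fun _ => h.measurable (fun k _ j => hmeas k j) 1 le_rfl

theorem measurable_familySizes (h : IsBranchingProcess ξ Z)
    (hmeas : ∀ k j, Measurable (ξ k j)) (z n : ℕ) : Measurable (familySizes Z z n) :=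
  have hZ (z k : ℕ) : Measurable (Z z k) := h.measurable (fun k _ j => hmeas k j) z le_rfl
  measurable_pi_lambda _ fun _ => measurable_pi_lambda _ fun k => (hZ _ k).sub (hZ _ k)

theorem map_familySizes_eq_pi (h : IsBranchingProcess ξ Z)
    (hmeas : ∀ k j, Measurable (ξ k j)) (hindep : iIndepFun (fun r : ℕ × ℕ => ξ r.1 r.2) P)
    (hdist : ∀ k j, P.map (ξ k j) = q k) (z n : ℕ) :
    P.map (familySizes Z z n)
      = Measure.pi fun _ : Fin z => P.map fun ω (k : Fin (n + 1)) => Z 1 k ω := by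
  refine Measure.ext_of_singleton fun x => ?_
  let t : ℕ → ℕ → ℕ := fun i k => if hik : i < z ∧ k < n + 1 then x ⟨i, hik.1⟩ ⟨k, hik.2⟩ else 0
  have hx : x = fun (i : Fin z) (k : Fin (n + 1)) => t i k := by
    funext i k
    simp only [t, Fin.is_lt, and_self, dif_pos]
  rw [Measure.map_apply (h.measurable_familySizes hmeas z n) (measurableSet_singleton x),
    Measure.pi_singleton, hx, h.preimage_familySizes_singleton,
    h.measure_descendantsEq hmeas hindep hdist,
    ← Fin.prod_univ_eq_prod_range]
  refine prod_congr rfl fun i _ => ?_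
  rw [Measure.map_apply (h.measurable_path hmeas n) (measurableSet_singleton _),
    h.preimage_path_singleton]

end IsBranchingProcess

end BPVE

open BPVE

theorem statement16_general
    {Ω : Type*} [MeasurableSpace Ω] (P : Measure Ω) [IsProbabilityMeasure P]
    (q : ℕ → Measure ℕ)
    (ξ : ℕ → ℕ → Ω → ℕ) (hmeas : ∀ k j, Measurable (ξ k j))
    (hindep : iIndepFun (fun r : ℕ × ℕ => ξ r.1 r.2) P)
    (hdist : ∀ k j, P.map (ξ k j) = q k)
    (Z : ℕ → ℕ → Ω → ℕ)
    (hZ0 : ∀ z ω, Z z 0 ω = z)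
    (hZrec : ∀ z k ω, Z z (k + 1) ω = ∑ j ∈ Finset.range (Z z k ω), ξ (k + 1) j ω)
    (z v n : ℕ) (hz : 1 ≤ z) (hvn : v ≤ n)
    (c : ℝ) :
    P {ω | c * z < (Z z v ω : ℝ) ∧ 0 < Z z n ω}
      ≤ z * P {ω | c < (Z 1 v ω : ℝ) ∧ 0 < Z 1 n ω}
        + z * P {ω | 0 < Z 1 n ω} *
            P {ω | ((z : ℝ) - 1) * c < (Z (z - 1) v ω : ℝ)} := by
  have h : IsBranchingProcess ξ Z := ⟨hZ0, hZrec⟩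
  obtain ⟨m, rfl⟩ : ∃ m, z = m + 1 := ⟨z - 1, by omega⟩
  let v' : Fin (n + 1) := ⟨v, by omega⟩
  set ν := P.map fun ω (k : Fin (n + 1)) => Z 1 k ω
  have : IsProbabilityMeasure ν :=
    Measure.isProbabilityMeasure_map (h.measurable_path hmeas n).aemeasurable
  have hν (s) : ν s = P ((fun ω (k : Fin (n + 1)) => Z 1 k ω) ⁻¹' s) :=
    Measure.map_apply (h.measurable_path hmeas n) .of_discrete
  have hpi (z) (s) : Measure.pi (fun _ : Fin z => ν) s = P (familySizes Z z n ⁻¹' s) := by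
    rw [← h.map_familySizes_eq_pi hmeas hindep hdist,
      Measure.map_apply (h.measurable_familySizes hmeas z n) .of_discrete]
  calc P {ω | c * ↑(m + 1) < (Z (m + 1) v ω : ℝ) ∧ 0 < Z (m + 1) n ω}
      = Measure.pi (fun _ : Fin (m + 1) => ν)
          {x | c * (m + 1) < ∑ i, (x i v' : ℝ) ∧ ∃ i, x i ∈ {y | 0 < y (Fin.last n)}} := by
        rw [hpi]
        congr 1
        ext ω
        simp [← Nat.cast_sum, h.sum_familySizes, h.exists_familySizes_pos_iff, v']
    _ ≤ _ := measure_pi_lt_sum_and_exists_mem_le ν (fun y => (y v' : ℝ)) _ c m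
    _ = _ := by
      rw [hν, hν, hpi]
      push_cast
      rw [add_sub_cancel_right]
      congr 3
      ext ω
      simp [← Nat.cast_sum, h.sum_familySizes, v']

/-- Let `(Z_n)` be a branching process in the varying environment
`(q_1, q_2, …)`, with `P_z` the law under the initial condition `Z_0 = z`. Then for all integers
`z ≥ 1`, `0 ≤ v ≤ n` and every `c > 0`,
`P_z(Z_v > cz, Z_n > 0) ≤ z·P_1(Z_v > c, Z_n > 0) + z·P_1(Z_n > 0)·P_{z-1}(Z_v > (z-1)c)`.
Here `Z z` denotes the process with `Z z 0 = z`, driven by offspring variables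
`ξ_{k,j} ∼ q_k`, independent over `(k,j)`. -/
theorem statement16
    {Ω : Type*} [MeasurableSpace Ω] (P : Measure Ω) [IsProbabilityMeasure P]
    (q : ℕ → Measure ℕ) [∀ i, IsProbabilityMeasure (q i)]
    (ξ : ℕ → ℕ → Ω → ℕ) (hmeas : ∀ k j, Measurable (ξ k j))
    (hindep : iIndepFun (fun r : ℕ × ℕ => ξ r.1 r.2) P)
    (hdist : ∀ k j, P.map (ξ k j) = q k)
    (Z : ℕ → ℕ → Ω → ℕ)
    (hZ0 : ∀ z ω, Z z 0 ω = z)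
    (hZrec : ∀ z k ω, Z z (k + 1) ω = ∑ j ∈ Finset.range (Z z k ω), ξ (k + 1) j ω)
    (z v n : ℕ) (hz : 1 ≤ z) (hvn : v ≤ n)
    (c : ℝ) (hc : 0 < c) :
    P {ω | c * z < (Z z v ω : ℝ) ∧ 0 < Z z n ω}
      ≤ z * P {ω | c < (Z 1 v ω : ℝ) ∧ 0 < Z 1 n ω}
        + z * P {ω | 0 < Z 1 n ω} *
            P {ω | ((z : ℝ) - 1) * c < (Z (z - 1) v ω : ℝ)} :=
  statement16_general P q ξ hmeas hindep hdist Z hZ0 hZrec z v n hz hvn c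
end
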